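/- The probability that the random binary search tree built from a uniformly random permutation of [n] has shape t equals the product over all nodes v of t of 1/st(v), where st(v) denotes the subtree size of node v in t. -/

import Mathlib

open Filter Real

/-- Binary trees: empty (`leaf`) or a node with left and right subtrees. -/
inductive BinTree where
  | leaf : BinTree
  | node : BinTree → BinTree → BinTree
deriving DecidableEq, Repr

namespace BinTree

/-- Number of nodes. -/
def size : BinTree → ℕ
  | leaf => 0
  | node l r => l.size + r.size + 1

/-- Product of subtree sizes over all nodes: `∏_{v∈t} st(v)`. -/
def stProd : BinTree → ℕ
  | leaf => 1
  | node l r => (node l r).size * l.stProd * r.stProd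

/-- Subtree-size entropy: `H_st(t) = ∑_{v∈t} lg st(v)`. -/
noncomputable def stEntropy : BinTree → ℝ
  | leaf => 0
  | node l r => Real.logb 2 ((node l r).size : ℝ) + l.stEntropy + r.stEntropy

/-- Size of the left subtree of the root. -/
def leftSize : BinTree → ℕ
  | leaf => 0
  | node l _ => l.size

/-- Every node has at most one (nonempty) child. -/
def isPath : BinTree → Prop
  | leaf => True
  | node l r => (l = leaf ∨ r = leaf) ∧ l.isPath ∧ r.isPath

/-- At every node the sizes of the two subtrees differ by at most 1. -/
def isBalanced : BinTree → Prop
  | leaf => True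
  | node l r => ((l.size : ℤ) - (r.size : ℤ)).natAbs ≤ 1 ∧ l.isBalanced ∧ r.isBalanced

/-- Number of leaves (nodes with no children). -/
def leafCount : BinTree → ℕ
  | leaf => 0
  | node l r => (if l = leaf ∧ r = leaf then 1 else 0) + l.leafCount + r.leafCount

/-- Number of binary nodes (both children present). -/
def binCount : BinTree → ℕ
  | leaf => 0
  | node l r => (if l ≠ leaf ∧ r ≠ leaf then 1 else 0) + l.binCount + r.binCount

/-- Number of nodes with only a left child. -/
def leftOnlyCount : BinTree → ℕ
  | leaf => 0
  | node l r => (if l ≠ leaf ∧ r = leaf then 1 else 0) + l.leftOnlyCount + r.leftOnlyCount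

/-- Number of nodes with only a right child. -/
def rightOnlyCount : BinTree → ℕ
  | leaf => 0
  | node l r => (if l = leaf ∧ r ≠ leaf then 1 else 0) + l.rightOnlyCount + r.rightOnlyCount

end BinTree

/-- Cartesian tree construction with explicit fuel (fuel ≥ length suffices). -/
def cartesianAux : ℕ → List ℕ → BinTree
  | 0, _ => .leaf
  | _ + 1, [] => .leaf
  | fuel + 1, x :: xs =>
      let m := List.foldl min x xs
      let i := (x :: xs).idxOf m
      .node (cartesianAux fuel ((x :: xs).take i)) (cartesianAux fuel ((x :: xs).drop (i + 1)))

/-- The Cartesian tree of a list: root at the (first) minimum, left/right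
subtrees built recursively from the prefix/suffix. -/
def cartesian (l : List ℕ) : BinTree := cartesianAux l.length l

/-- The array `A[1..n]` (as a list) associated with a permutation of `Fin n`. -/
def permList {n : ℕ} (p : Equiv.Perm (Fin n)) : List ℕ := List.ofFn fun k => (p k : ℕ)

/-- All binary trees with exactly `n` nodes. -/
def treesOfSize : ℕ → Finset BinTree
  | 0 => {BinTree.leaf}
  | n + 1 =>
    (Finset.range (n + 1)).attach.biUnion fun i =>
      ((treesOfSize i.1) ×ˢ (treesOfSize (n - i.1))).image fun p => BinTree.node p.1 p.2
termination_by n => n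
decreasing_by
  · exact Nat.lt_succ_of_le (Nat.le_of_lt_succ (Finset.mem_range.mp i.2))
  · exact Nat.lt_succ_of_le (Nat.sub_le n i.1)

/-- Shannon entropy (base 2) of the random-BST shape distribution on `n` nodes,
which assigns probability `1/stProd t` to each tree `t` on `n` nodes. -/
noncomputable def shapeEntropy (n : ℕ) : ℝ :=
  - ∑ t ∈ treesOfSize n, (1 / (t.stProd : ℝ)) * Real.logb 2 (1 / (t.stProd : ℝ))

/-- Expectation of `f` under the random-BST shape distribution on `n` nodes. -/
noncomputable def expCount (f : BinTree → ℕ) (n : ℕ) : ℝ :=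
  ∑ t ∈ treesOfSize n, (1 / (t.stProd : ℝ)) * (f t : ℝ)

/-- The entropy recurrence: `H 0 = H 1 = 0`, `H n = lg n + (2/n) ∑_{i<n} H i`. -/
noncomputable def Hrec : ℕ → ℝ
  | 0 => 0
  | 1 => 0
  | n + 2 =>
      Real.logb 2 ((n + 2 : ℕ) : ℝ) +
        (2 / ((n + 2 : ℕ) : ℝ)) * ∑ i ∈ (Finset.range (n + 2)).attach, Hrec i.1
termination_by n => n
decreasing_by exact Finset.mem_range.mp i.2

/-- `rmq_A(i,j)` (1-based): the position of the (first) minimum of `A[i..j]`. -/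
def rmqFun (A : List ℕ) (i j : ℕ) : ℕ :=
  let s := (A.drop (i - 1)).take (j - i + 1)
  i + s.idxOf (List.foldl min (s.headD 0) s)

/-- The inorder rank of the LCA of the nodes with inorder ranks `i` and `j`. -/
def lcaInorder : BinTree → ℕ → ℕ → ℕ
  | .leaf, _, _ => 0
  | .node l r, i, j =>
      let m := l.size + 1
      if i < m ∧ j < m then lcaInorder l i j
      else if m < i ∧ m < j then m + lcaInorder r (i - m) (j - m)
      else m

/-- The subtree rooted at the node reached from the root by the given
left(`false`)/right(`true`) directions, if it exists. -/
def subAt : BinTree → List Bool → Option BinTree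
  | t, [] => some t
  | .leaf, _ :: _ => none
  | .node l _, false :: p => subAt l p
  | .node _ r, true :: p => subAt r p

/-- Subtree size of the node at a position (0 if there is no node there). -/
def stAt (t : BinTree) (pos : List Bool) : ℕ := ((subAt t pos).getD .leaf).size

/-- Left-subtree size of the node at a position. -/
def lsAt (t : BinTree) (pos : List Bool) : ℕ := ((subAt t pos).getD .leaf).leftSize

/-- `Pruned μ s`: `μ` is obtained from `s` by replacing some subtrees by `leaf`. -/
inductive Pruned : BinTree → BinTree → Prop
  | leaf (t) : Pruned .leaf t
  | node {l' r' l r} : Pruned l' l → Pruned r' r → Pruned (.node l' r') (.node l r)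

/-- `PrunedN k μ s`: `μ` is obtained from `s` by pruning exactly `k` (nonempty) subtrees. -/
inductive PrunedN : ℕ → BinTree → BinTree → Prop
  | refl (t) : PrunedN 0 t t
  | prune (l r) : PrunedN 1 .leaf (.node l r)
  | node {a b l' r' l r} : PrunedN a l' l → PrunedN b r' r → PrunedN (a + b) (.node l' r') (.node l r)

/-- `IsSubtree s t`: `s` is the subtree of `t` rooted at some node (or `t` itself). -/
inductive IsSubtree : BinTree → BinTree → Prop
  | refl (t) : IsSubtree t t
  | left {s l r} : IsSubtree s l → IsSubtree s (.node l r)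
  | right {s l r} : IsSubtree s r → IsSubtree s (.node l r)

/-- `∑_{v∈μ} lg st_s(v)`: sum over the nodes of `μ` of the log-subtree-sizes
taken in the host tree `s` (for `μ` pruned from `s`). -/
noncomputable def mixedEntropy : BinTree → BinTree → ℝ
  | .leaf, _ => 0
  | .node _ _, .leaf => 0
  | .node l' r', .node l r =>
      Real.logb 2 ((BinTree.node l r).size : ℝ) + mixedEntropy l' l + mixedEntropy r' r

/-- 1-based preorder index of the node at a position (0 if no node there). -/
def preorderIdx : BinTree → List Bool → ℕ
  | _, [] => 1
  | .leaf, _ :: _ => 0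
  | .node l _, false :: p => 1 + preorderIdx l p
  | .node l r, true :: p => 1 + l.size + preorderIdx r p

/-- 1-based inorder index of the node at a position. -/
def inorderIdx : BinTree → List Bool → ℕ
  | t, [] => t.leftSize + 1
  | .leaf, _ :: _ => 0
  | .node l _, false :: p => inorderIdx l p
  | .node l r, true :: p => l.size + 1 + inorderIdx r p

/-- Binary entropy function (base 2). -/
noncomputable def binH (x : ℝ) : ℝ := -x * Real.logb 2 x - (1 - x) * Real.logb 2 (1 - x)

/-!
Counting the orderings of a finite set `S` of naturals by their Cartesian tree: an ordering has
tree `node l r` exactly when its minimum `m` splits it as `u ++ m :: v`, where `u` orders some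
`l.size`-subset `A` of `S \ {m}` with tree `l` and `v` orders the complement with tree `r`.
Hence the number `N(t)` of orderings with tree `t` satisfies
`N(node l r) = C(|l| + |r|, |l|) · N(l) · N(r)`, and induction gives `N(t) · ∏ st(v) = |t|!`.
Permutations of `Fin n` are exactly the orderings of `{0, …, n - 1}`.
-/

theorem cartesianAux_congr {f g : ℕ} {l : List ℕ} (hf : l.length ≤ f) (hg : l.length ≤ g) :
    cartesianAux f l = cartesianAux g l := by
  induction f generalizing g l with
  | zero =>
    obtain rfl : l = [] := by simpa using hf
    cases g <;> rfl
  | succ f ih =>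
    obtain _ | ⟨x, xs⟩ := l
    · cases g <;> rfl
    obtain _ | g := g
    · simp at hg
    have hi : (x :: xs).idxOf (xs.foldl min x) < xs.length + 1 :=
      List.idxOf_lt_length_of_mem (List.min?_mem (List.min?_cons' (xs := xs)))
    simp only [List.length_cons] at hf hg
    simp only [cartesianAux]
    congr 1 <;> apply ih <;>
      simp only [List.length_take, List.length_drop, List.length_cons] <;> omega

theorem cartesianAux_eq_cartesian {f : ℕ} {l : List ℕ} (h : l.length ≤ f) :
    cartesianAux f l = cartesian l :=
  cartesianAux_congr h le_rfl

theorem size_cartesianAux {f : ℕ} {l : List ℕ} (h : l.length ≤ f) :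
    (cartesianAux f l).size = l.length := by
  induction f generalizing l with
  | zero =>
    obtain rfl : l = [] := by simpa using h
    rfl
  | succ f ih =>
    obtain _ | ⟨x, xs⟩ := l
    · rfl
    have hi : (x :: xs).idxOf (xs.foldl min x) < xs.length + 1 :=
      List.idxOf_lt_length_of_mem (List.min?_mem (List.min?_cons' (xs := xs)))
    simp only [List.length_cons] at h
    simp only [cartesianAux, BinTree.size]
    rw [ih (by rw [List.length_take, List.length_cons]; omega),
      ih (by rw [List.length_drop, List.length_cons]; omega)]
    simp only [List.length_take, List.length_drop, List.length_cons]
    omega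

theorem size_cartesian (l : List ℕ) : (cartesian l).size = l.length :=
  size_cartesianAux le_rfl

theorem cartesian_append_cons {u v : List ℕ} {m : ℕ} (hu : ∀ x ∈ u, m < x)
    (hv : ∀ x ∈ v, m < x) :
    cartesian (u ++ m :: v) = .node (cartesian u) (cartesian v) := by
  obtain ⟨x, xs, hx⟩ : ∃ x xs, u ++ m :: v = x :: xs := List.exists_cons_of_ne_nil (by simp)
  have hmin : xs.foldl min x = m := by
    have : (x :: xs).min? = some m := by
      rw [List.min?_eq_some_iff, ← hx]
      refine ⟨by simp, fun b hb => ?_⟩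
      simp only [List.mem_append, List.mem_cons] at hb
      rcases hb with hb | rfl | hb
      exacts [(hu b hb).le, le_rfl, (hv b hb).le]
    rwa [List.min?_cons', Option.some_inj] at this
  have hidx : (x :: xs).idxOf m = u.length := by
    rw [← hx, List.idxOf_append_of_notMem fun h => (hu m h).false]
    simp
  have hlen : (x :: xs).length = u.length + v.length + 1 := by
    rw [← hx, List.length_append, List.length_cons]; omega
  rw [cartesian, hx, hlen, cartesianAux, hmin, hidx, ← hx,
    cartesianAux_eq_cartesian (by simp), cartesianAux_eq_cartesian (by simp)]
  simp [List.drop_append, List.drop_eq_nil_of_le]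

open Finset Nat

section Arrangements

variable {α : Type*} [DecidableEq α]

noncomputable def arrangements (S : Finset α) : Finset (List α) :=
  S.toList.permutations.toFinset

theorem mem_arrangements {S : Finset α} {a : List α} :
    a ∈ arrangements S ↔ a.Nodup ∧ a.toFinset = S := by
  rw [arrangements, List.mem_toFinset, List.mem_permutations]
  constructor
  · intro h
    exact ⟨h.nodup_iff.2 S.nodup_toList,
      by rw [List.toFinset_eq_of_perm _ _ h, toList_toFinset]⟩
  · rintro ⟨ha, rfl⟩
    exact List.perm_of_nodup_nodup_toFinset_eq ha (nodup_toList _) (toList_toFinset _).symm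

theorem card_arrangements (S : Finset α) : #(arrangements S) = (#S)! := by
  rw [arrangements, List.toFinset_card_of_nodup (List.nodup_permutations _ S.nodup_toList),
    List.length_permutations, length_toList]

theorem arrangements_empty : arrangements (∅ : Finset α) = {[]} := by
  ext a
  simp +contextual [mem_arrangements, List.toFinset_eq_empty_iff]

theorem length_of_mem_arrangements {S : Finset α} {a : List α} (ha : a ∈ arrangements S) :
    a.length = #S := by
  obtain ⟨hnd, rfl⟩ := mem_arrangements.1 ha
  exact (List.toFinset_card_of_nodup hnd).symm

theorem mem_of_mem_arrangements {S : Finset α} {a : List α} (ha : a ∈ arrangements S) {x : α}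
    (hx : x ∈ a) : x ∈ S := by
  rw [← (mem_arrangements.1 ha).2]
  exact List.mem_toFinset.2 hx

theorem append_cons_mem_arrangements_insert {E : Finset α} {m : α} (hm : m ∉ E)
    {u v : List α} :
    u ++ m :: v ∈ arrangements (insert m E) ↔
      ∃ A ⊆ E, u ∈ arrangements A ∧ v ∈ arrangements (E \ A) := by
  simp only [mem_arrangements, List.nodup_append, List.nodup_cons, Finset.ext_iff,
    List.toFinset_append, List.toFinset_cons, mem_union, mem_insert, List.mem_toFinset]
  constructor
  · rintro ⟨⟨hu, ⟨hmv, hv⟩, hdisj⟩, hS⟩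
    refine ⟨u.toFinset, fun x hx => ?_, ⟨hu, by simp⟩, hv, fun x => ?_⟩
    · rw [List.mem_toFinset] at hx
      grind
    · rw [Finset.mem_sdiff, List.mem_toFinset]
      grind
  · rintro ⟨A, hAE, ⟨hu, hA⟩, hv, hEA⟩
    grind

end Arrangements

noncomputable def cartesianCount (S : Finset ℕ) (t : BinTree) : ℕ :=
  #{a ∈ arrangements S | cartesian a = t}

theorem cartesian_append_cons_of_mem_arrangements {E A : Finset ℕ} {m : ℕ} {u v : List ℕ}
    (hm : ∀ x ∈ E, m < x) (hAE : A ⊆ E) (hu : u ∈ arrangements A)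
    (hv : v ∈ arrangements (E \ A)) :
    cartesian (u ++ m :: v) = .node (cartesian u) (cartesian v) :=
  cartesian_append_cons (fun x hx => hm x (hAE (mem_of_mem_arrangements hu hx)))
    (fun x hx => hm x (mem_sdiff.1 (mem_of_mem_arrangements hv hx)).1)

theorem cartesianCount_insert_node {E : Finset ℕ} {m : ℕ} (hm : ∀ x ∈ E, m < x)
    (l r : BinTree) :
    cartesianCount (insert m E) (.node l r) =
      ∑ A ∈ E.powersetCard l.size, cartesianCount A l * cartesianCount (E \ A) r := by
  have hmE : m ∉ E := fun h => (hm m h).false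
  symm
  calc ∑ A ∈ E.powersetCard l.size, cartesianCount A l * cartesianCount (E \ A) r
      = #((E.powersetCard l.size).sigma fun A =>
          {u ∈ arrangements A | cartesian u = l} ×ˢ
            {v ∈ arrangements (E \ A) | cartesian v = r}) := by
        rw [card_sigma]
        simp only [card_product, cartesianCount]
    _ = cartesianCount (insert m E) (.node l r) := by
      refine card_bij (fun p _ => p.2.1 ++ m :: p.2.2) ?_ ?_ ?_
      · rintro ⟨A, u, v⟩ hp
        simp only [mem_sigma, mem_powersetCard, mem_product, mem_filter] at hp
        obtain ⟨⟨hAE, -⟩, ⟨hu, rfl⟩, hv, rfl⟩ := hp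
        exact mem_filter.2 ⟨(append_cons_mem_arrangements_insert hmE).2 ⟨A, hAE, hu, hv⟩,
          cartesian_append_cons_of_mem_arrangements hm hAE hu hv⟩
      · rintro ⟨A, u, v⟩ hp ⟨A', u', v'⟩ hp' h
        simp only [mem_sigma, mem_powersetCard, mem_product, mem_filter] at hp hp'
        have hlen : u.length = u'.length := by
          rw [← size_cartesian, ← size_cartesian, hp.2.1.2, hp'.2.1.2]
        obtain ⟨rfl, huv⟩ := List.append_inj h hlen
        obtain rfl := List.cons_injective huv
        obtain rfl : A = A' := by
          rw [← (mem_arrangements.1 hp.2.1.1).2, ← (mem_arrangements.1 hp'.2.1.1).2]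
        rfl
      · intro a ha
        obtain ⟨ha, hla⟩ := mem_filter.1 ha
        obtain ⟨u, v, rfl⟩ := List.append_of_mem (List.mem_toFinset.1
          ((mem_arrangements.1 ha).2 ▸ mem_insert_self m E))
        obtain ⟨A, hAE, hu, hv⟩ := (append_cons_mem_arrangements_insert hmE).1 ha
        rw [cartesian_append_cons_of_mem_arrangements hm hAE hu hv] at hla
        obtain ⟨rfl, rfl⟩ := BinTree.node.inj hla
        refine ⟨⟨A, u, v⟩, ?_, rfl⟩
        simp only [mem_sigma, mem_powersetCard, mem_product, mem_filter]
        refine ⟨⟨hAE, ?_⟩, ⟨hu, trivial⟩, hv, trivial⟩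
        rw [← length_of_mem_arrangements hu, size_cartesian]

theorem cartesianCount_mul_stProd (t : BinTree) {S : Finset ℕ} (hS : #S = t.size) :
    cartesianCount S t * t.stProd = t.size ! := by
  induction t generalizing S with
  | leaf =>
    obtain rfl : S = ∅ := card_eq_zero.1 hS
    simp [cartesianCount, arrangements_empty, filter_singleton,
      show cartesian [] = .leaf from rfl, BinTree.stProd, BinTree.size]
  | node l r ihl ihr =>
    have hne : S.Nonempty := card_pos.1 (by rw [hS, BinTree.size]; omega)
    set E := S.erase (S.min' hne)
    have hm : ∀ x ∈ E, S.min' hne < x := fun x hx => min'_lt_of_mem_erase_min' S hne hx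
    have hE : #E = l.size + r.size := by
      rw [card_erase_of_mem (S.min'_mem hne), hS, BinTree.size]; rfl
    have hterm : ∀ A ∈ E.powersetCard l.size,
        cartesianCount A l * cartesianCount (E \ A) r * (BinTree.node l r).stProd
          = (l.size + r.size + 1) * (l.size ! * r.size !) := by
      intro A hA
      obtain ⟨hAE, hA⟩ := mem_powersetCard.1 hA
      have hEA : #(E \ A) = r.size := by rw [card_sdiff_of_subset hAE, hE, hA]; omega
      rw [← ihl hA, ← ihr hEA, BinTree.stProd, BinTree.size]
      ring
    rw [← insert_erase (S.min'_mem hne), cartesianCount_insert_node hm, sum_mul,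
      sum_congr rfl hterm, sum_const, card_powersetCard, hE, smul_eq_mul, BinTree.size,
      factorial_succ, choose_symm_add, ← add_choose_mul_factorial_mul_factorial]
    ring

theorem BinTree.stProd_pos (t : BinTree) : 0 < t.stProd := by
  induction t with
  | leaf => exact Nat.one_pos
  | node l r ihl ihr => exact Nat.mul_pos (Nat.mul_pos (Nat.succ_pos _) ihl) ihr

theorem permList_injective (n : ℕ) : Function.Injective (permList (n := n)) := fun _ _ h =>
  Equiv.ext fun k => Fin.val_injective (congrFun (List.ofFn_injective h) k)

theorem permList_mem_arrangements {n : ℕ} (p : Equiv.Perm (Fin n)) :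
    permList p ∈ arrangements (range n) := by
  refine mem_arrangements.2 ⟨List.nodup_ofFn.2 (Fin.val_injective.comp p.injective), ?_⟩
  ext z
  simp only [permList, List.mem_toFinset, List.mem_ofFn, mem_range]
  exact ⟨fun ⟨k, hk⟩ => hk ▸ (p k).isLt, fun hz => ⟨p.symm ⟨z, hz⟩, by simp⟩⟩

theorem image_permList (n : ℕ) : univ.image (permList (n := n)) = arrangements (range n) := by
  refine eq_of_subset_of_card_le (image_subset_iff.2 fun p _ => permList_mem_arrangements p) ?_
  rw [card_arrangements, card_range, card_image_of_injective _ (permList_injective n),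
    Finset.card_univ, Fintype.card_perm, Fintype.card_fin]

theorem card_cartesian_permList_eq (n : ℕ) (t : BinTree) :
    #{p : Equiv.Perm (Fin n) | cartesian (permList p) = t} = cartesianCount (range n) t := by
  rw [cartesianCount, ← image_permList, filter_image,
    card_image_of_injective _ (permList_injective n)]

/-- The probability that the Cartesian tree (equivalently, the random BST) of a
uniformly random permutation of `[n]` has shape `t` equals `∏_{v∈t} 1/st(v)`. -/
theorem stmt0 (n : ℕ) (t : BinTree) (ht : t.size = n) :
    ((Finset.univ.filter fun p : Equiv.Perm (Fin n) =>
        cartesian (permList p) = t).card : ℝ) / (n.factorial : ℝ)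
      = 1 / (t.stProd : ℝ) := by
  subst ht
  rw [card_cartesian_permList_eq, div_eq_div_iff (by positivity)
    (by exact_mod_cast t.stProd_pos.ne'), one_mul]
  exact_mod_cast cartesianCount_mul_stProd t (card_range _)
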